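/- Let k ≥ 3 and let G be a connected k-regular graph containing a set C of k+1 vertices that induce a complete graph minus one edge uv. Then G has a k-degenerate decomposition. -/

import Mathlib

open SimpleGraph Set

/-- A set of vertices is independent in `G`. -/
def Indep {V : Type*} (G : SimpleGraph V) (A : Set V) : Prop :=
  ∀ u ∈ A, ∀ v ∈ A, ¬ G.Adj u v

/-- The subgraph of `G` induced by `B` is `d`-degenerate: every finite nonempty
subset of `B` contains a vertex with at most `d` neighbours inside it. -/
def DegenerateOn {V : Type*} (G : SimpleGraph V) (B : Set V) (d : ℕ) : Prop :=
  ∀ s : Set V, s ⊆ B → s.Finite → s.Nonempty →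
    ∃ v ∈ s, (s ∩ G.neighborSet v).ncard ≤ d

/-- `G` is `d`-degenerate. -/
def Degenerate {V : Type*} (G : SimpleGraph V) (d : ℕ) : Prop :=
  DegenerateOn G Set.univ d

/-- `G` is near-bipartite: its vertex set is partitioned into an independent set `A`
and a set `B` inducing a forest. -/
def NearBipartite {V : Type*} (G : SimpleGraph V) : Prop :=
  ∃ A B : Set V, A ∪ B = Set.univ ∧ Disjoint A B ∧ Indep G A ∧
    (G.induce B).IsAcyclic

/-- `G` has a `k`-degenerate decomposition: a partition into an independent set `A`
and a set `B` inducing a `(k-2)`-degenerate graph. -/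
def KDegenDecomp {V : Type*} (G : SimpleGraph V) (k : ℕ) : Prop :=
  ∃ A B : Set V, A ∪ B = Set.univ ∧ Disjoint A B ∧ Indep G A ∧
    DegenerateOn G B (k - 2)

/-!
Fix a root `r ∈ C` and build an independent set `I ⊆ V \ C` greedily, scanning the vertices
from the farthest from `r` inwards. Every vertex of `V \ (C ∪ I)` then has a neighbour in `I`
that is not closer to `r` than itself, and a different neighbour that is strictly closer. If
`B = V \ A` is ranked so that closer vertices rank higher, these two neighbours leave each such
vertex at most `k - 2` neighbours in `B` of rank at most its own, which gives the degeneracy.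

It remains to put part of `C` into `A`. If `I` avoids the neighbourhoods of `u` and `v`, take
`A = I ∪ {u, v}`. If `I` meets the neighbourhood of `u`, take `A = I ∪ {d}` for some
`d ∈ C \ {u, v}` and rank `v` below the rest of `C \ {u, v}` and `u` above it; here `k ≥ 3`
gives `v` a second neighbour in `C \ {u, v, d}`. Regularity forces every vertex of `C \ {u, v}`
to have all its neighbours in `C`, which keeps `I ∪ {d}` independent.
-/

section

variable {V : Type*}

theorem degenerateOn_of_rank {α : Type*} [LinearOrder α] {G : SimpleGraph V} [G.LocallyFinite]
    {B : Set V} {d : ℕ} (ρ : V → α)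
    (h : ∀ x ∈ B, (B ∩ {y | ρ y ≤ ρ x} ∩ G.neighborSet x).ncard ≤ d) :
    DegenerateOn G B d := by
  intro s hsB hfin hne
  obtain ⟨x, hxs, hmax⟩ := hfin.exists_maximalFor ρ s hne
  refine ⟨x, hxs, le_trans (ncard_le_ncard ?_ (toFinite _)) (h x (hsB hxs))⟩
  rintro y ⟨hys, hyx⟩
  exact ⟨⟨hsB hys, not_lt.mp fun hlt => not_le_of_gt hlt (hmax hys hlt.le)⟩, hyx⟩

def HasTwoExits (G : SimpleGraph V) (A : Set V) (ρ : V → ℤ) (x : V) : Prop :=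
  ∃ p q, p ≠ q ∧ G.Adj x p ∧ G.Adj x q ∧ (p ∈ A ∨ ρ x < ρ p) ∧ (q ∈ A ∨ ρ x < ρ q)

theorem kDegenDecomp_of_hasTwoExits {G : SimpleGraph V} [G.LocallyFinite] {k : ℕ}
    (hdeg : ∀ x, (G.neighborSet x).ncard ≤ k) {A : Set V} (hA : Indep G A) (ρ : V → ℤ)
    (h : ∀ x ∉ A, HasTwoExits G A ρ x) : KDegenDecomp G k := by
  refine ⟨A, Aᶜ, union_compl_self A, disjoint_compl_right, hA,
    degenerateOn_of_rank ρ fun x hx => ?_⟩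
  obtain ⟨p, q, hpq, hp, hq, hpA, hqA⟩ := h x hx
  have hback : Aᶜ ∩ {y | ρ y ≤ ρ x} ∩ G.neighborSet x ⊆ G.neighborSet x \ {p, q} := by
    rintro y ⟨⟨hyA, hyρ⟩, hyx⟩
    refine ⟨hyx, ?_⟩
    rintro (rfl | rfl)
    · exact hpA.elim hyA (not_lt_of_ge hyρ)
    · exact hqA.elim hyA (not_lt_of_ge hyρ)
  calc _ ≤ (G.neighborSet x \ {p, q}).ncard := ncard_le_ncard hback (toFinite _)
    _ = (G.neighborSet x).ncard - 2 := by
      rw [ncard_sdiff (pair_subset (s := G.neighborSet x) hp hq) (toFinite _), ncard_pair hpq]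
    _ ≤ k - 2 := Nat.sub_le_sub_right (hdeg x) 2

/-- Membership in the independent set built greedily by scanning `{x | P x}` in increasing
order of the key `κ`. -/
def greedyIndep (G : SimpleGraph V) (P : V → Prop) (κ : V → ℕ) (x : V) : Prop :=
  P x ∧ ∀ y, G.Adj x y → κ y < κ x → ¬ greedyIndep G P κ y
termination_by κ x

theorem greedyIndep_iff {G : SimpleGraph V} {P : V → Prop} {κ : V → ℕ} {x : V} :
    greedyIndep G P κ x ↔ P x ∧ ∀ y, G.Adj x y → κ y < κ x → ¬ greedyIndep G P κ y := by
  rw [greedyIndep]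

theorem greedyIndep.prop {G : SimpleGraph V} {P : V → Prop} {κ : V → ℕ} {x : V}
    (h : greedyIndep G P κ x) : P x :=
  (greedyIndep_iff.mp h).1

theorem indep_greedyIndep {G : SimpleGraph V} {P : V → Prop} {κ : V → ℕ}
    (hκ : Function.Injective κ) : Indep G {x | greedyIndep G P κ x} := by
  intro x hx y hy hxy
  rcases lt_trichotomy (κ x) (κ y) with h | h | h
  · exact (greedyIndep_iff.mp hy).2 x hxy.symm h hx
  · exact hxy.ne (hκ h)
  · exact (greedyIndep_iff.mp hx).2 y hxy h hy

theorem exists_adj_greedyIndep {G : SimpleGraph V} {P : V → Prop} {κ : V → ℕ} {x : V}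
    (hx : P x) (h : ¬ greedyIndep G P κ x) :
    ∃ y, G.Adj x y ∧ κ y < κ x ∧ greedyIndep G P κ y := by
  rw [greedyIndep_iff] at h
  push Not at h
  exact h hx

theorem exists_injective_key_antitone [Finite V] (m : V → ℕ) :
    ∃ κ : V → ℕ, Function.Injective κ ∧ ∀ a x, κ a < κ x → m x ≤ m a := by
  obtain ⟨N, ⟨e⟩⟩ := Finite.exists_equiv_fin V
  obtain ⟨M, hM⟩ := (Set.finite_range m).bddAbove
  have hmM : ∀ x, m x ≤ M := fun x => hM ⟨x, rfl⟩
  -- the key is the pair `(M - m x, e x)` in lexicographic order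
  refine ⟨fun x => N * (M - m x) + e x, fun a b hab => e.injective (Fin.ext ?_), fun a x h => ?_⟩
  · simpa [Nat.mul_add_mod, Nat.mod_eq_of_lt (e a).isLt, Nat.mod_eq_of_lt (e b).isLt] using
      congrArg (· % N) hab
  · by_contra! hlt
    have := Nat.mul_le_mul_left N (show M - m x + 1 ≤ M - m a by have := hmM x; omega)
    have := (e x).isLt
    simp only at h
    nlinarith

theorem SimpleGraph.Reachable.exists_adj_dist_lt {G : SimpleGraph V} {x r : V}
    (h : G.Reachable x r) (hne : x ≠ r) : ∃ z, G.Adj x z ∧ G.dist z r < G.dist x r := by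
  obtain ⟨p, hp⟩ := h.exists_walk_length_eq_dist
  cases p with
  | nil => exact absurd rfl hne
  | cons hadj q =>
    refine ⟨_, hadj, ?_⟩
    rw [← hp, SimpleGraph.Walk.length_cons]
    exact Nat.lt_succ_of_le (dist_le q)

theorem indep_union {G : SimpleGraph V} {A B : Set V} (hA : Indep G A) (hB : Indep G B)
    (hAB : ∀ a ∈ A, ∀ b ∈ B, ¬ G.Adj a b) : Indep G (A ∪ B) := by
  rintro x (hx | hx) y (hy | hy) hxy
  exacts [hA x hx y hy hxy, hAB x hx y hy hxy, hAB y hy x hx hxy.symm, hB x hx y hy hxy]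

structure IsCliqueMinusEdge (G : SimpleGraph V) (C : Set V) (u v : V) : Prop where
  left_mem : u ∈ C
  right_mem : v ∈ C
  ne : u ≠ v
  not_adj : ¬ G.Adj u v
  adj : ∀ a ∈ C, ∀ b ∈ C, a ≠ b → s(a, b) ≠ s(u, v) → G.Adj a b

namespace IsCliqueMinusEdge

variable {G : SimpleGraph V} {C : Set V} {u v d : V}

theorem symm (h : IsCliqueMinusEdge G C u v) : IsCliqueMinusEdge G C v u :=
  ⟨h.right_mem, h.left_mem, h.ne.symm, fun h' => h.not_adj h'.symm,
    fun a ha b hb hab he => h.adj a ha b hb hab fun he' => he (he'.trans Sym2.eq_swap)⟩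

theorem adj_of_ne_of_ne (h : IsCliqueMinusEdge G C u v) (hd : d ∈ C) (hdu : d ≠ u) (hdv : d ≠ v)
    {c : V} (hc : c ∈ C) (hcd : c ≠ d) : G.Adj d c :=
  h.adj d hd c hc hcd.symm (by simp [hdu, hdv])

theorem indep_pair (h : IsCliqueMinusEdge G C u v) : Indep G {u, v} := by
  rintro x (rfl | rfl) y (rfl | rfl) hxy
  exacts [hxy.ne rfl, h.not_adj hxy, h.not_adj hxy.symm, hxy.ne rfl]

theorem neighborSet_subset [G.LocallyFinite] {k : ℕ} (h : IsCliqueMinusEdge G C u v)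
    (hcard : C.ncard = k + 1) (hdeg : (G.neighborSet d).ncard ≤ k) (hd : d ∈ C) (hdu : d ≠ u)
    (hdv : d ≠ v) : G.neighborSet d ⊆ C := by
  have hsub : C \ {d} ⊆ G.neighborSet d := fun c hc => h.adj_of_ne_of_ne hd hdu hdv hc.1 hc.2
  have hle : (G.neighborSet d).ncard ≤ (C \ {d}).ncard := by
    rw [ncard_sdiff_singleton_of_mem hd, hcard]
    omega
  rw [← eq_of_subset_of_ncard_le hsub hle (toFinite _)]
  exact sdiff_subset

theorem one_lt_ncard_sdiff_pair {k : ℕ} (h : IsCliqueMinusEdge G C u v) (hcard : C.ncard = k + 1)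
    (hk : 3 ≤ k) : 1 < (C \ {u, v}).ncard := by
  rw [ncard_sdiff (pair_subset h.left_mem h.right_mem), ncard_pair h.ne]
  omega

end IsCliqueMinusEdge

structure IsGradedIndep (G : SimpleGraph V) (C : Set V) (m : V → ℕ) (I : Set V) : Prop where
  indep : Indep G I
  disjoint : Disjoint I C
  exits : ∀ x ∉ C, x ∉ I → ∃ a ∈ I, ∃ z, a ≠ z ∧ G.Adj x a ∧ G.Adj x z ∧ m z < m x

theorem exists_isGradedIndep [Finite V] {G : SimpleGraph V} (hG : G.Connected) {C : Set V}
    {r : V} (hr : r ∈ C) : ∃ m I, IsGradedIndep G C m I := by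
  obtain ⟨κ, hκinj, hκ⟩ := exists_injective_key_antitone (G.dist · r)
  refine ⟨(G.dist · r), {x | greedyIndep G (· ∉ C) κ x}, ⟨indep_greedyIndep hκinj,
    disjoint_left.mpr fun x hx => hx.prop, fun x hxC hxI => ?_⟩⟩
  obtain ⟨a, hxa, hκa, ha⟩ := exists_adj_greedyIndep (P := (· ∉ C)) hxC hxI
  obtain ⟨z, hxz, hz⟩ :=
    (hG.preconnected x r).exists_adj_dist_lt (ne_of_mem_of_not_mem hr hxC).symm
  refine ⟨a, ha, z, ?_, hxa, hxz, hz⟩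
  rintro rfl
  exact absurd (hκ a x hκa) (not_le_of_gt hz)

theorem IsGradedIndep.hasTwoExits {G : SimpleGraph V} {C I A : Set V} {m : V → ℕ}
    (hI : IsGradedIndep G C m I) (hIA : I ⊆ A) {ρ : V → ℤ}
    (hρ : ∀ x z, x ∉ C → m z < m x → ρ x < ρ z) {x : V} (hxC : x ∉ C) (hxA : x ∉ A) :
    HasTwoExits G A ρ x := by
  obtain ⟨a, ha, z, haz, hxa, hxz, hz⟩ := hI.exits x hxC fun h => hxA (hIA h)
  exact ⟨a, z, haz, hxa, hxz, Or.inl (hIA ha), Or.inr (hρ x z hxC hz)⟩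

section Decomposition

variable {G : SimpleGraph V} [G.LocallyFinite] {k : ℕ} {C I : Set V} {u v : V} {m : V → ℕ}

theorem kDegenDecomp_of_not_adj_gradedIndep (hdeg : ∀ x, (G.neighborSet x).ncard ≤ k)
    (hC : IsCliqueMinusEdge G C u v) (hI : IsGradedIndep G C m I)
    (hu : ¬ ∃ a ∈ I, G.Adj u a) (hv : ¬ ∃ a ∈ I, G.Adj v a) : KDegenDecomp G k := by
  have hA : Indep G (I ∪ {u, v}) := indep_union hI.indep hC.indep_pair <| by
    rintro a ha _ (rfl | rfl) hab
    exacts [hu ⟨a, ha, hab.symm⟩, hv ⟨a, ha, hab.symm⟩]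
  refine kDegenDecomp_of_hasTwoExits hdeg hA (fun x => -(m x : ℤ)) fun x hx => ?_
  by_cases hxC : x ∈ C
  · have hxu : x ≠ u := fun h => hx (Or.inr (Or.inl h))
    have hxv : x ≠ v := fun h => hx (Or.inr (Or.inr h))
    exact ⟨u, v, hC.ne, hC.adj_of_ne_of_ne hxC hxu hxv hC.left_mem hxu.symm,
      hC.adj_of_ne_of_ne hxC hxu hxv hC.right_mem hxv.symm, Or.inl (by simp), Or.inl (by simp)⟩
  · exact hI.hasTwoExits subset_union_left (fun _ _ _ h => by omega) hxC hx

theorem kDegenDecomp_of_adj_gradedIndep (hdeg : ∀ x, (G.neighborSet x).ncard ≤ k) (hk : 3 ≤ k)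
    (hC : IsCliqueMinusEdge G C u v) (hcard : C.ncard = k + 1) (hI : IsGradedIndep G C m I)
    (hu : ∃ a ∈ I, G.Adj u a) : KDegenDecomp G k := by
  classical
  obtain ⟨a, ha, hua⟩ := hu
  have hCfin : C.Finite := finite_of_ncard_ne_zero (by omega)
  obtain ⟨d₁, d₂, ⟨hd₁C, hd₁uv⟩, ⟨hd₂C, hd₂uv⟩, hd₁₂⟩ :=
    (one_lt_ncard_iff hCfin.sdiff).mp (hC.one_lt_ncard_sdiff_pair hcard hk)
  simp only [mem_insert_iff, mem_singleton_iff, not_or] at hd₁uv hd₂uv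
  have hd₂N := hC.neighborSet_subset hcard (hdeg d₂) hd₂C hd₂uv.1 hd₂uv.2
  have hA : Indep G (I ∪ {d₂}) :=
    indep_union hI.indep (by rintro _ rfl _ rfl h; exact h.ne rfl) fun b hb c hc hbc =>
      hI.disjoint.notMem_of_mem_left hb (hd₂N (mem_singleton_iff.mp hc ▸ hbc).symm)
  let ρ : V → ℤ := fun x => if x = u then 3 else if x = v then 1 else if x ∈ C then 2 else -(m x)
  refine kDegenDecomp_of_hasTwoExits hdeg hA ρ fun x hx => ?_
  have hxd₂ : x ≠ d₂ := fun h => hx (Or.inr h)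
  by_cases hxC : x ∉ C
  · refine hI.hasTwoExits subset_union_left (fun x z hxC hz => ?_) hxC hx
    simp only [ρ, if_neg hxC, if_neg (ne_of_mem_of_not_mem hC.left_mem hxC).symm,
      if_neg (ne_of_mem_of_not_mem hC.right_mem hxC).symm]
    split_ifs <;> omega
  push Not at hxC
  rcases eq_or_ne x u with rfl | hxu
  · exact ⟨a, d₂, fun h => hI.disjoint.notMem_of_mem_left ha (h ▸ hd₂C), hua,
      (hC.adj_of_ne_of_ne hd₂C hd₂uv.1 hd₂uv.2 hxC hxd₂).symm, Or.inl (Or.inl ha),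
      Or.inl (Or.inr rfl)⟩
  rcases eq_or_ne x v with rfl | hxv
  · refine ⟨d₂, d₁, hd₁₂.symm, (hC.adj_of_ne_of_ne hd₂C hd₂uv.1 hd₂uv.2 hxC hxd₂).symm,
      (hC.adj_of_ne_of_ne hd₁C hd₁uv.1 hd₁uv.2 hxC fun h => hd₁uv.2 h.symm).symm,
      Or.inl (Or.inr rfl), Or.inr ?_⟩
    simp [ρ, hxu, hd₁uv.1, hd₁uv.2, hd₁C]
  · refine ⟨d₂, u, hd₂uv.1, hC.adj_of_ne_of_ne hxC hxu hxv hd₂C hxd₂.symm,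
      hC.adj_of_ne_of_ne hxC hxu hxv hC.left_mem hxu.symm, Or.inl (Or.inr rfl), Or.inr ?_⟩
    simp [ρ, hxu, hxv, hxC]

end Decomposition

end

/-- If `G` is connected, `k`-regular (`k ≥ 3`) and contains a set `C` of `k+1` vertices
inducing a complete graph minus one edge `uv`, then `G` has a `k`-degenerate
decomposition. -/
theorem stmt4 {V : Type*} [Fintype V] (k : ℕ) (hk : 3 ≤ k) (G : SimpleGraph V)
    (hconn : G.Connected)
    (hreg : ∀ v : V, (G.neighborSet v).ncard = k)
    (C : Set V) (u v : V) (hu : u ∈ C) (hv : v ∈ C) (huv : u ≠ v)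
    (hcard : C.ncard = k + 1)
    (hnadj : ¬ G.Adj u v)
    (hclique : ∀ a ∈ C, ∀ b ∈ C, a ≠ b → ¬ (a = u ∧ b = v) → ¬ (a = v ∧ b = u) →
      G.Adj a b) :
    KDegenDecomp G k := by
  classical
  have hC : IsCliqueMinusEdge G C u v := ⟨hu, hv, huv, hnadj, fun a ha b hb hab he =>
    hclique a ha b hb hab (fun h => he (by rw [h.1, h.2]))
      (fun h => he (by rw [h.1, h.2, Sym2.eq_swap]))⟩
  have hdeg : ∀ x, (G.neighborSet x).ncard ≤ k := fun x => (hreg x).le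
  obtain ⟨m, I, hI⟩ := exists_isGradedIndep hconn hu
  by_cases hIu : ∃ a ∈ I, G.Adj u a
  · exact kDegenDecomp_of_adj_gradedIndep hdeg hk hC hcard hI hIu
  by_cases hIv : ∃ a ∈ I, G.Adj v a
  · exact kDegenDecomp_of_adj_gradedIndep hdeg hk hC.symm hcard hI hIv
  exact kDegenDecomp_of_not_adj_gradedIndep hdeg hC hI hIu hIv
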